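/- Let (X_j)_{j=1}^n be independent nonnegative random variables, let η > 0, y₀ > 0, c > 0, and let J ∈ {0,…,n}. Suppose for each j ≤ J the random variable X_j satisfies the anticoncentration bound P(X_j ∈ [u, u+c]) ≤ Kc for all u ∈ ℝ, where K > 0. Then for any y ≥ y₀, P(Σ_{j=1}^n X_j ∈ [y, y+c]) ≤ J·K·c + P(Σ_{j=J+1}^n X_j ≥ y₀). -/

import Mathlib

open MeasureTheory ProbabilityTheory

lemma key_anticonc {Ω : Type*} [MeasurableSpace Ω] (P : Measure Ω) [IsProbabilityMeasure P]
    (X T : Ω → ℝ) (hX : Measurable X) (hT : Measurable T)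
    (hind : IndepFun X T P) (c : ℝ) (a : ENNReal)
    (h : ∀ u, P {ω | X ω ∈ Set.Icc u (u + c)} ≤ a) (y : ℝ) :
    P {ω | X ω + T ω ∈ Set.Icc y (y + c)} ≤ a := by
  have hmap : P.map (fun ω => (X ω, T ω)) = (P.map X).prod (P.map T) :=
    (indepFun_iff_map_prod_eq_prod_map_map hX.aemeasurable hT.aemeasurable).1 hind
  have hs : MeasurableSet {p : ℝ × ℝ | p.1 + p.2 ∈ Set.Icc y (y + c)} :=
    (measurable_fst.add measurable_snd) measurableSet_Icc
  have heq : P {ω | X ω + T ω ∈ Set.Icc y (y + c)} =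
      ((P.map X).prod (P.map T)) {p : ℝ × ℝ | p.1 + p.2 ∈ Set.Icc y (y + c)} := by
    rw [← hmap, Measure.map_apply (hX.prodMk hT) hs]
    rfl
  rw [heq, Measure.prod_apply_symm hs]
  haveI : IsProbabilityMeasure (P.map T) := Measure.isProbabilityMeasure_map hT.aemeasurable
  calc ∫⁻ t, (P.map X) ((fun x => (x, t)) ⁻¹' {p : ℝ × ℝ | p.1 + p.2 ∈ Set.Icc y (y + c)})
        ∂(P.map T)
      ≤ ∫⁻ _, a ∂(P.map T) := by
        refine lintegral_mono fun t => ?_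
        have hset : ((fun x => (x, t)) ⁻¹' {p : ℝ × ℝ | p.1 + p.2 ∈ Set.Icc y (y + c)})
            = Set.Icc (y - t) ((y - t) + c) := by
          ext x
          simp only [Set.mem_preimage, Set.mem_setOf_eq, Set.mem_Icc]
          constructor <;> intro ⟨h1, h2⟩ <;> constructor <;> linarith
        rw [hset, Measure.map_apply hX measurableSet_Icc]
        exact h (y - t)
    _ = a := by simp

/-- Let `X_1, …, X_n` be independent nonnegative random variables, `J ≤ n`, and suppose
each `X_j` with `j ≤ J` satisfies the anticoncentration bound `P(X_j ∈ [u, u+c]) ≤ Kc`.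
Then for any `y ≥ y₀ > 0`,
`P(Σ_{j=1}^n X_j ∈ [y, y+c]) ≤ J·K·c + P(Σ_{j=J+1}^n X_j ≥ y₀)`. -/
theorem sum_anticoncentration_decomposition
    {Ω : Type*} [MeasurableSpace Ω] (P : Measure Ω) [IsProbabilityMeasure P]
    (n : ℕ) (X : ℕ → Ω → ℝ) (hmeas : ∀ j, Measurable (X j))
    (hindep : iIndepFun X P)
    (hnonneg : ∀ j ω, 0 ≤ X j ω)
    (η y₀ c K : ℝ) (hη : 0 < η) (hy₀ : 0 < y₀) (hc : 0 < c) (hK : 0 < K)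
    (J : ℕ) (hJ : J ≤ n)
    (hanti : ∀ j, 1 ≤ j → j ≤ J → ∀ u : ℝ,
      P {ω | X j ω ∈ Set.Icc u (u + c)} ≤ ENNReal.ofReal (K * c))
    (y : ℝ) (hy : y₀ ≤ y) :
    P {ω | (∑ j ∈ Finset.Icc 1 n, X j ω) ∈ Set.Icc y (y + c)} ≤
      ENNReal.ofReal (J * K * c) + P {ω | y₀ ≤ ∑ j ∈ Finset.Icc (J + 1) n, X j ω} := by
  classical
  set B : Set Ω := {ω | y₀ ≤ ∑ j ∈ Finset.Icc (J + 1) n, X j ω} with hB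
  set C : ℕ → Set Ω := fun j =>
    {ω | X j ω + ∑ i ∈ Finset.Icc (j + 1) n, X i ω ∈ Set.Icc y (y + c)} with hC
  have hsub : {ω | (∑ j ∈ Finset.Icc 1 n, X j ω) ∈ Set.Icc y (y + c)} ⊆
      (⋃ j ∈ Finset.Icc 1 J, C j) ∪ B := by
    intro ω hω
    simp only [Set.mem_setOf_eq, Set.mem_Icc] at hω
    by_cases hall : ∀ j ∈ Finset.Icc 1 J, X j ω = 0
    · right
      have hsplit : ∑ j ∈ Finset.Icc 1 n, X j ω
          = ∑ j ∈ Finset.Icc 1 J, X j ω + ∑ j ∈ Finset.Icc (J + 1) n, X j ω := by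
        rw [show (1 : ℕ) = 0 + 1 from rfl, Finset.Icc_add_one_left_eq_Ioc, Finset.Icc_add_one_left_eq_Ioc,
          zero_add, Finset.Icc_add_one_left_eq_Ioc, Finset.sum_Ioc_consecutive _ (Nat.zero_le J) hJ]
      have hzero : ∑ j ∈ Finset.Icc 1 J, X j ω = 0 := Finset.sum_eq_zero hall
      have : y₀ ≤ ∑ j ∈ Finset.Icc (J + 1) n, X j ω := by
        have := hω.1
        rw [hsplit, hzero, zero_add] at this
        linarith
      exact this
    · left
      push_neg at hall
      have hex : ∃ j, j ∈ Finset.Icc 1 J ∧ X j ω ≠ 0 := hall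
      set j := Nat.find hex with hj
      obtain ⟨hjmem, _⟩ := Nat.find_spec hex
      have hjmin : ∀ i < j, ¬(i ∈ Finset.Icc 1 J ∧ X i ω ≠ 0) := fun i hi => Nat.find_min hex hi
      rw [Finset.mem_Icc] at hjmem
      obtain ⟨hj1, hjJ⟩ := hjmem
      -- prefix is zero
      have hpre : ∀ i ∈ Finset.Ioc 0 (j - 1), X i ω = 0 := by
        intro i hi
        rw [Finset.mem_Ioc] at hi
        have hiJ : i ≤ J := le_trans (le_trans hi.2 (Nat.sub_le j 1)) hjJ
        have hij : i < j := by omega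
        have := hjmin i hij
        rw [not_and, Finset.mem_Icc] at this
        by_contra hne
        exact this ⟨hi.1, hiJ⟩ hne
      have hIoc : Finset.Ioc (j - 1) j = {j} := by
        ext i
        simp only [Finset.mem_Ioc, Finset.mem_singleton]
        omega
      have hsum : ∑ i ∈ Finset.Icc 1 n, X i ω
          = X j ω + ∑ i ∈ Finset.Icc (j + 1) n, X i ω := by
        rw [show (1 : ℕ) = 0 + 1 from rfl, Finset.Icc_add_one_left_eq_Ioc, zero_add, Finset.Icc_add_one_left_eq_Ioc]
        rw [← Finset.sum_Ioc_consecutive (fun i => X i ω) (Nat.zero_le (j - 1))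
          (le_trans (Nat.sub_le j 1) (le_trans hjJ hJ))]
        rw [← Finset.sum_Ioc_consecutive (fun i => X i ω) (Nat.sub_le j 1)
          (le_trans hjJ hJ), hIoc, Finset.sum_singleton,
          Finset.sum_eq_zero hpre, zero_add]
      refine Set.mem_biUnion (Finset.mem_Icc.mpr ⟨hj1, hjJ⟩) ?_
      show X j ω + ∑ i ∈ Finset.Icc (j + 1) n, X i ω ∈ Set.Icc y (y + c)
      rw [← hsum]
      exact ⟨hω.1, hω.2⟩
  -- now bound the measures
  calc P {ω | (∑ j ∈ Finset.Icc 1 n, X j ω) ∈ Set.Icc y (y + c)}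
      ≤ P ((⋃ j ∈ Finset.Icc 1 J, C j) ∪ B) := measure_mono hsub
    _ ≤ P (⋃ j ∈ Finset.Icc 1 J, C j) + P B := measure_union_le _ _
    _ ≤ ENNReal.ofReal (J * K * c) + P B := by
        gcongr
        calc P (⋃ j ∈ Finset.Icc 1 J, C j)
            ≤ ∑ j ∈ Finset.Icc 1 J, P (C j) := measure_biUnion_finset_le _ _
          _ ≤ ∑ _j ∈ Finset.Icc 1 J, ENNReal.ofReal (K * c) := by
              refine Finset.sum_le_sum fun j hjmem => ?_
              rw [Finset.mem_Icc] at hjmem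
              have hind : IndepFun (X j) (fun ω => ∑ i ∈ Finset.Icc (j + 1) n, X i ω) P := by
                have : IndepFun (∑ i ∈ Finset.Icc (j + 1) n, X i) (X j) P :=
                  hindep.indepFun_finsetSum_of_notMem hmeas
                    (by simp [Finset.mem_Icc])
                have heq : (∑ i ∈ Finset.Icc (j + 1) n, X i)
                    = fun ω => ∑ i ∈ Finset.Icc (j + 1) n, X i ω := by
                  ext ω; simp
                rw [heq] at this
                exact this.symm
              exact key_anticonc P (X j) _ (hmeas j)
                (Finset.measurable_sum _ fun i _ => hmeas i) hind c _
                (hanti j hjmem.1 hjmem.2) y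
          _ = ENNReal.ofReal (J * K * c) := by
              rw [Finset.sum_const, Nat.card_Icc]
              simp only [Nat.add_sub_cancel, nsmul_eq_mul]
              rw [← ENNReal.ofReal_natCast J, ← ENNReal.ofReal_mul (by positivity),
                mul_assoc]
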